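/- arXiv:1302.1340 — 2 statements merged into one kernel-verified Lean document; each statement's English description precedes it below -/
import Mathlib

section
/- Let φ be an F-filter on X and let f ∈ F. If X(f,r) ∩ B ≠ ∅ for every r > 0 and every B ∈ φ, then there exists an F-ultrafilter p on X such that φ ∪ {X(f,r) : r > 0} ⊆ p. -/
open Set

variable {X : Type*} [Nonempty X] [TopologicalSpace X] [DiscreteTopology X]

/-- The set `X(f,r) = {x ∈ X : |f(x)| ≤ r}`. -/
def XSet (f : BoundedContinuousFunction X ℂ) (r : ℝ) : Set X := {x | ‖f x‖ ≤ r}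

/-- An `F`-family on `X`: a nonempty collection of nonempty subsets of `X` such that for every
member `A ≠ X` there are `B` in the collection and `f ∈ F` with `f(B) = {0}`,
`f(X \ A) = {1}`. -/
def FFamily (F : StarSubalgebra ℂ (BoundedContinuousFunction X ℂ)) (𝒜 : Set (Set X)) : Prop :=
  𝒜.Nonempty ∧ (∀ A ∈ 𝒜, A.Nonempty) ∧
    ∀ A ∈ 𝒜, A ≠ Set.univ →
      ∃ B ∈ 𝒜, ∃ f ∈ F, (∀ x ∈ B, f x = 0) ∧ ∀ x ∉ A, f x = 1

/-- A filter on the set `X`, viewed as a collection of subsets. -/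
def IsSetFilter (φ : Set (Set X)) : Prop :=
  φ.Nonempty ∧ (∀ A ∈ φ, ∀ B ∈ φ, A ∩ B ∈ φ) ∧
    (∀ A ∈ φ, ∀ B : Set X, A ⊆ B → B ∈ φ) ∧ ∅ ∉ φ

/-- An `F`-filter on `X` is a filter which is also an `F`-family. -/
def FFilter (F : StarSubalgebra ℂ (BoundedContinuousFunction X ℂ)) (φ : Set (Set X)) : Prop :=
  IsSetFilter φ ∧ FFamily F φ

/-- An `F`-ultrafilter on `X` is an `F`-filter maximal with respect to inclusion. -/
def FUltrafilter (F : StarSubalgebra ℂ (BoundedContinuousFunction X ℂ)) (φ : Set (Set X)) : Prop :=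
  FFilter F φ ∧ ∀ ψ : Set (Set X), FFilter F ψ → φ ⊆ ψ → ψ = φ

/-- `F₀ = {f ∈ F : X(f,r) ≠ ∅ for all r > 0}`. -/
def FZero (F : StarSubalgebra ℂ (BoundedContinuousFunction X ℂ)) :
    Set (BoundedContinuousFunction X ℂ) :=
  {f | f ∈ F ∧ ∀ r : ℝ, 0 < r → (XSet f r).Nonempty}

/-- `Z(A) = {f ∈ F : f(x) = 0 for all x ∈ A}`. -/
def ZSet (F : StarSubalgebra ℂ (BoundedContinuousFunction X ℂ)) (A : Set X) :
    Set (BoundedContinuousFunction X ℂ) :=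
  {f | f ∈ F ∧ ∀ x ∈ A, f x = 0}

/-- The finite intersection property. -/
def FIP (𝒜 : Set (Set X)) : Prop :=
  ∀ s : Finset (Set X), ↑s ⊆ 𝒜 → s.Nonempty → (⋂₀ (s : Set (Set X))).Nonempty

/-- A filter base on `X`. -/
def IsFilterBase (ℬ : Set (Set X)) : Prop :=
  ℬ.Nonempty ∧ ∅ ∉ ℬ ∧ ∀ A ∈ ℬ, ∀ B ∈ ℬ, ∃ C ∈ ℬ, C ⊆ A ∩ B

/-- The filter generated by a filter base. -/
def genFilter (ℬ : Set (Set X)) : Set (Set X) :=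
  {A | ∃ B ∈ ℬ, B ⊆ A}

/-- `δX`, the space of all `F`-ultrafilters on `X`. -/
def Delta (F : StarSubalgebra ℂ (BoundedContinuousFunction X ℂ)) : Type _ :=
  {p : Set (Set X) // FUltrafilter F p}

/-- `Â = {p ∈ δX : A ∈ p}`. -/
def hatSet (F : StarSubalgebra ℂ (BoundedContinuousFunction X ℂ)) (A : Set X) :
    Set (Delta F) :=
  {p | A ∈ p.1}

/-- The topology on `δX` having `{Â : A ⊆ X}` as a base. -/
instance (F : StarSubalgebra ℂ (BoundedContinuousFunction X ℂ)) :
    TopologicalSpace (Delta F) :=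
  TopologicalSpace.generateFrom {S | ∃ A : Set X, S = hatSet F A}

/-- For an `F`-filter `φ`, `φ̂ = {p ∈ δX : φ ⊆ p}`. -/
def hatF (F : StarSubalgebra ℂ (BoundedContinuousFunction X ℂ)) (φ : Set (Set X)) :
    Set (Delta F) :=
  {p | φ ⊆ p.1}

/-- `τ(F)`, the weakest topology on `X` making every member of `F` continuous. -/
noncomputable def tauF (F : StarSubalgebra ℂ (BoundedContinuousFunction X ℂ)) : TopologicalSpace X :=
  ⨅ f ∈ (F : Set (BoundedContinuousFunction X ℂ)),
    TopologicalSpace.induced (fun x => f x) inferInstance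

/-- `B(I) = {X(f,r) : f ∈ I, r > 0}` for an ideal `I` of `F`. -/
def BIdeal (F : StarSubalgebra ℂ (BoundedContinuousFunction X ℂ)) (I : Ideal F) :
    Set (Set X) :=
  {S | ∃ f ∈ I, ∃ r : ℝ, 0 < r ∧ S = XSet (f : BoundedContinuousFunction X ℂ) r}

/-!
Adjoining the sets `X(f,r)` to `φ` yields a filter, by the hypothesis, and it is again an
`F`-family: if `g ∈ F` vanishes on `B' ∈ φ` and is `1` off `B`, and `u ∈ F` vanishes on
`X(f,r/2)` and is `1` off `X(f,r)`, then `1 - (1 - g)(1 - u)` separates `B' ∩ X(f,r/2)` from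
`B ∩ X(f,r)`. For `u` take a ramp function of `|f|²`: it lies in `F` because `F` is closed
and, by Weierstrass, it is a uniform limit of polynomials in the real-valued `|f|² = f̄ f ∈ F`.
Zorn's lemma then extends this `F`-filter to an `F`-ultrafilter.
-/

section

open scoped BoundedContinuousFunction Polynomial

variable {X : Type*}

theorem IsSetFilter.univ_mem {φ : Set (Set X)} (hφ : IsSetFilter φ) : univ ∈ φ :=
  let ⟨A, hA⟩ := hφ.1
  hφ.2.2.1 A hA univ (subset_univ A)

theorem isSetFilter_sUnion {c : Set (Set (Set X))} (hc : ∀ χ ∈ c, IsSetFilter χ)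
    (hchain : IsChain (· ⊆ ·) c) (hne : c.Nonempty) : IsSetFilter (⋃₀ c) := by
  obtain ⟨χ, hχ⟩ := hne
  refine ⟨(hc χ hχ).1.mono (subset_sUnion_of_mem hχ), ?_, ?_, ?_⟩
  · rintro A ⟨χ₁, hχ₁, hA⟩ B ⟨χ₂, hχ₂, hB⟩
    rcases hchain.total hχ₁ hχ₂ with h₁₂ | h₂₁
    · exact ⟨χ₂, hχ₂, (hc χ₂ hχ₂).2.1 A (h₁₂ hA) B hB⟩
    · exact ⟨χ₁, hχ₁, (hc χ₁ hχ₁).2.1 A hA B (h₂₁ hB)⟩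
  · rintro A ⟨χ, hχ, hA⟩ B hAB
    exact ⟨χ, hχ, (hc χ hχ).2.2.1 A hA B hAB⟩
  · rintro ⟨χ, hχ, h0⟩
    exact (hc χ hχ).2.2.2 h0

variable [TopologicalSpace X]

theorem BoundedContinuousFunction.aeval_apply (g : X →ᵇ ℂ) (p : ℝ[X]) (x : X) :
    Polynomial.aeval g p x = Polynomial.aeval (g x) p := by
  induction p using Polynomial.induction_on' with
  | add p q hp hq => simp [hp, hq]
  | monomial n c => simp

theorem Subalgebra.mem_of_forall_apply_eq_comp {F : Subalgebra ℂ (X →ᵇ ℂ)}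
    (hF : IsClosed (F : Set (X →ᵇ ℂ))) {g : X →ᵇ ℂ} (hg : g ∈ F) {t : X → ℝ}
    (hgt : ∀ x, g x = t x) {θ : ℝ → ℝ} (hθ : Continuous θ) {u : X →ᵇ ℂ}
    (hu : ∀ x, u x = θ (t x)) : u ∈ F := by
  refine hF.closure_subset_iff.2 le_rfl (Metric.mem_closure_iff.2 fun ε hε => ?_)
  obtain ⟨p, hp⟩ := exists_polynomial_near_of_continuousOn (-‖g‖) ‖g‖ θ hθ.continuousOn
    (ε / 2) (half_pos hε)
  have ht : ∀ x, t x ∈ Icc (-‖g‖) ‖g‖ := fun x => by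
    rw [mem_Icc, ← abs_le, ← Real.norm_eq_abs, ← Complex.norm_real, ← hgt]
    exact g.norm_coe_le_norm x
  refine ⟨Polynomial.aeval g p, ?_, ?_⟩
  · exact Polynomial.coe_aeval_mk_apply (S := F.restrictScalars ℝ) (p := p) (x := g) hg ▸
      (Polynomial.aeval (⟨g, hg⟩ : F.restrictScalars ℝ) p).2
  · rw [dist_comm, dist_eq_norm]
    refine lt_of_le_of_lt ((BoundedContinuousFunction.norm_le (half_pos hε).le).2 fun x => ?_)
      (half_lt_self hε)
    rw [BoundedContinuousFunction.coe_sub, Pi.sub_apply, BoundedContinuousFunction.aeval_apply,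
      hgt, hu, ← Complex.coe_algebraMap, Polynomial.aeval_algebraMap_apply, Complex.coe_algebraMap,
      Polynomial.coe_aeval_eq_eval, ← Complex.ofReal_sub, Complex.norm_real]
    exact (hp _ (ht x)).le

def FSeparates (F : StarSubalgebra ℂ (X →ᵇ ℂ)) (B A : Set X) : Prop :=
  ∃ g ∈ F, (∀ x ∈ B, g x = 0) ∧ ∀ x ∉ A, g x = 1

theorem fSeparates_univ (F : StarSubalgebra ℂ (X →ᵇ ℂ)) (B : Set X) : FSeparates F B univ :=
  ⟨0, zero_mem F, fun _ _ => rfl, fun x hx => (hx (mem_univ x)).elim⟩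

variable {F : StarSubalgebra ℂ (X →ᵇ ℂ)}

theorem FSeparates.mono {A A' B B' : Set X} (h : FSeparates F B A) (hB : B' ⊆ B) (hA : A ⊆ A') :
    FSeparates F B' A' :=
  let ⟨g, hg, hg0, hg1⟩ := h
  ⟨g, hg, fun x hx => hg0 x (hB hx), fun x hx => hg1 x fun h => hx (hA h)⟩

theorem FSeparates.inter {A₁ A₂ B₁ B₂ : Set X} (h₁ : FSeparates F B₁ A₁)
    (h₂ : FSeparates F B₂ A₂) : FSeparates F (B₁ ∩ B₂) (A₁ ∩ A₂) := by
  obtain ⟨g₁, hg₁, hg₁0, hg₁1⟩ := h₁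
  obtain ⟨g₂, hg₂, hg₂0, hg₂1⟩ := h₂
  refine ⟨g₁ + g₂ - g₁ * g₂, sub_mem (add_mem hg₁ hg₂) (mul_mem hg₁ hg₂), ?_, ?_⟩
  · rintro x ⟨hx₁, hx₂⟩
    simp [hg₁0 x hx₁, hg₂0 x hx₂]
  · intro x hx
    rcases not_and_or.1 hx with hx₁ | hx₂
    · simp [hg₁1 x hx₁]
    · simp [hg₂1 x hx₂]

theorem XSet_mono (f : X →ᵇ ℂ) {r s : ℝ} (hrs : r ≤ s) : XSet f r ⊆ XSet f s :=
  fun _ hx => le_trans hx hrs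

theorem fSeparates_XSet (hF : IsClosed (F : Set (X →ᵇ ℂ))) {f : X →ᵇ ℂ} (hf : f ∈ F) {a b : ℝ}
    (hab : a < b) : FSeparates F (XSet f a) (XSet f b) := by
  let θ : ℝ → ℝ := fun s => projIcc 0 1 zero_le_one ((s - a) / (b - a))
  have hθ : Continuous θ := continuous_subtype_val.comp
    (continuous_projIcc.comp ((continuous_id.sub continuous_const).div_const _))
  let u : X →ᵇ ℂ := .ofNormedAddCommGroup (fun x => (θ ‖f x‖ : ℂ))
    (Complex.continuous_ofReal.comp (hθ.comp (continuous_norm.comp f.continuous))) 1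
    fun x => by
      rw [Complex.norm_real, Real.norm_eq_abs, abs_le]
      exact ⟨by linarith [(projIcc 0 1 zero_le_one ((‖f x‖ - a) / (b - a))).2.1],
        (projIcc 0 1 zero_le_one ((‖f x‖ - a) / (b - a))).2.2⟩
  have hu : u ∈ F := by
    refine Subalgebra.mem_of_forall_apply_eq_comp (F := F.toSubalgebra) (t := fun x => ‖f x‖ ^ 2)
      hF (show star f * f ∈ F from mul_mem (star_mem hf) hf) (fun x => ?_)
      (hθ.comp Real.continuous_sqrt) (fun x => ?_)
    · simp [Complex.conj_mul']
    · simp [u, Real.sqrt_sq (norm_nonneg _)]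
  refine ⟨u, hu, fun x hx => ?_, fun x hx => ?_⟩
  · have : (‖f x‖ - a) / (b - a) ≤ 0 :=
      div_nonpos_of_nonpos_of_nonneg (by linarith [show ‖f x‖ ≤ a from hx]) (by linarith)
    simp [u, θ, projIcc_of_le_left zero_le_one this]
  · have : 1 ≤ (‖f x‖ - a) / (b - a) :=
      (one_le_div (by linarith)).2 (by linarith [show b < ‖f x‖ from not_le.1 hx])
    simp [u, θ, projIcc_of_right_le zero_le_one this]

theorem FFamily.exists_fSeparates {𝒜 : Set (Set X)} (h𝒜 : FFamily F 𝒜) {A : Set X}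
    (hA : A ∈ 𝒜) : ∃ B ∈ 𝒜, FSeparates F B A := by
  by_cases hAu : A = univ
  · obtain ⟨B, hB⟩ := h𝒜.1
    exact ⟨B, hB, hAu ▸ fSeparates_univ F B⟩
  · exact h𝒜.2.2 A hA hAu

theorem fFamily_sUnion {c : Set (Set (Set X))} (hc : ∀ χ ∈ c, FFamily F χ) (hne : c.Nonempty) :
    FFamily F (⋃₀ c) := by
  obtain ⟨χ, hχ⟩ := hne
  refine ⟨(hc χ hχ).1.mono (subset_sUnion_of_mem hχ), ?_, ?_⟩
  · rintro A ⟨χ, hχ, hA⟩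
    exact (hc χ hχ).2.1 A hA
  · rintro A ⟨χ, hχ, hA⟩ hAu
    obtain ⟨B, hB, hsep⟩ := (hc χ hχ).2.2 A hA hAu
    exact ⟨B, ⟨χ, hχ, hB⟩, hsep⟩

theorem FFilter.exists_fUltrafilter_superset {ψ : Set (Set X)} (hψ : FFilter F ψ) :
    ∃ p, FUltrafilter F p ∧ ψ ⊆ p := by
  obtain ⟨p, hψp, hp⟩ := zorn_subset_nonempty {χ | FFilter F χ}
    (fun c hc hchain hne => ⟨⋃₀ c,
      ⟨isSetFilter_sUnion (fun χ hχ => (hc hχ).1) hchain hne,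
        fFamily_sUnion (fun χ hχ => (hc hχ).2) hne⟩,
      fun _ => subset_sUnion_of_mem⟩) ψ hψ
  exact ⟨p, ⟨hp.1, fun χ hχ hpχ => (hp.2 hχ hpχ).antisymm hpχ⟩, hψp⟩

/-- The filter generated by `φ ∪ {X(f,r) : r > 0}`. -/
def adjoinXSet (φ : Set (Set X)) (f : X →ᵇ ℂ) : Set (Set X) :=
  {A | ∃ B ∈ φ, ∃ r : ℝ, 0 < r ∧ B ∩ XSet f r ⊆ A}

variable {φ : Set (Set X)} {f : X →ᵇ ℂ}

theorem subset_adjoinXSet : φ ⊆ adjoinXSet φ f :=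
  fun A hA => ⟨A, hA, 1, one_pos, inter_subset_left⟩

theorem XSet_mem_adjoinXSet (hφ : IsSetFilter φ) {r : ℝ} (hr : 0 < r) :
    XSet f r ∈ adjoinXSet φ f :=
  ⟨univ, hφ.univ_mem, r, hr, inter_subset_right⟩

theorem nonempty_of_mem_adjoinXSet (h : ∀ r : ℝ, 0 < r → ∀ B ∈ φ, (XSet f r ∩ B).Nonempty)
    {A : Set X} (hA : A ∈ adjoinXSet φ f) : A.Nonempty :=
  let ⟨B, hB, r, hr, hBA⟩ := hA
  let ⟨x, hxr, hxB⟩ := h r hr B hB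
  ⟨x, hBA ⟨hxB, hxr⟩⟩

theorem isSetFilter_adjoinXSet (hφ : IsSetFilter φ)
    (h : ∀ r : ℝ, 0 < r → ∀ B ∈ φ, (XSet f r ∩ B).Nonempty) : IsSetFilter (adjoinXSet φ f) := by
  refine ⟨⟨univ, subset_adjoinXSet hφ.univ_mem⟩, ?_, ?_,
    fun h0 => (nonempty_of_mem_adjoinXSet h h0).ne_empty rfl⟩
  · rintro A₁ ⟨B₁, hB₁, r₁, hr₁, hA₁⟩ A₂ ⟨B₂, hB₂, r₂, hr₂, hA₂⟩
    refine ⟨B₁ ∩ B₂, hφ.2.1 B₁ hB₁ B₂ hB₂, min r₁ r₂, lt_min hr₁ hr₂, ?_⟩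
    rintro x ⟨⟨hx₁, hx₂⟩, hxr⟩
    exact ⟨hA₁ ⟨hx₁, XSet_mono f (min_le_left _ _) hxr⟩,
      hA₂ ⟨hx₂, XSet_mono f (min_le_right _ _) hxr⟩⟩
  · rintro A ⟨B, hB, r, hr, hBA⟩ C hAC
    exact ⟨B, hB, r, hr, hBA.trans hAC⟩

theorem fFilter_adjoinXSet (hF : IsClosed (F : Set (X →ᵇ ℂ))) (hf : f ∈ F) (hφ : FFilter F φ)
    (h : ∀ r : ℝ, 0 < r → ∀ B ∈ φ, (XSet f r ∩ B).Nonempty) : FFilter F (adjoinXSet φ f) := by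
  have hψ := isSetFilter_adjoinXSet hφ.1 h
  refine ⟨hψ, hψ.1, fun A hA => nonempty_of_mem_adjoinXSet h hA, ?_⟩
  rintro A ⟨B, hB, r, hr, hBA⟩ -
  obtain ⟨B', hB', hsep⟩ := hφ.2.exists_fSeparates hB
  exact ⟨B' ∩ XSet f (r / 2), ⟨B', hB', r / 2, half_pos hr, subset_rfl⟩,
    (hsep.inter (fSeparates_XSet hF hf (half_lt_self hr))).mono subset_rfl hBA⟩

end

theorem stmt2 (F : StarSubalgebra ℂ (BoundedContinuousFunction X ℂ)) (hF : IsClosed (F : Set (BoundedContinuousFunction X ℂ)))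
    (φ : Set (Set X)) (hφ : FFilter F φ) (f : BoundedContinuousFunction X ℂ) (hf : f ∈ F)
    (h : ∀ r : ℝ, 0 < r → ∀ B ∈ φ, (XSet f r ∩ B).Nonempty) :
    ∃ p : Set (Set X), FUltrafilter F p ∧ φ ⊆ p ∧ ∀ r : ℝ, 0 < r → XSet f r ∈ p := by
  obtain ⟨p, hp, hψp⟩ := (fFilter_adjoinXSet hF hf hφ h).exists_fUltrafilter_superset
  exact ⟨p, hp, subset_adjoinXSet.trans hψp, fun r hr => hψp (XSet_mem_adjoinXSet hφ.1 hr)⟩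
end

section
/- For every x ∈ X, the family 𝒜ₓ = {X(f,r) : f ∈ F, f(x) = 0, r > 0} is a filter base on X; the filter on X generated by 𝒜ₓ equals the neighborhood filter N_F(x) of x in the topology τ(F), and N_F(x) is an F-ultrafilter on X. -/
open Set

variable {X : Type*} [Nonempty X] [TopologicalSpace X] [DiscreteTopology X]

/-!
The sets `X(f,r)` with `f ∈ F`, `f x = 0`, `r > 0` are directed, since
`X(|f|² + |g|², (min r s)²) ⊆ X(f,r) ∩ X(g,s)`, and they form a neighbourhood basis of `x` for
`τ(F)`, since every `f ∈ F` stays `ε`-close to `f x` on `X(f - f x, ε)`. As `F` is closed,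
continuous functional calculus gives for every `g ∈ F` a member of `F` equal to `0` where
`|g| ≤ r/2` and to `1` where `|g| ≥ r`; this makes `N_F(x)` an `F`-filter. For maximality, let
`ψ ⊇ N_F(x)` be an `F`-filter and `A ∈ ψ`: the function `f ∈ F` separating some `B ∈ ψ` from
`X ∖ A` vanishes at `x` (otherwise `{f ≠ 0} ∈ ψ` would be disjoint from `B`), so the
neighbourhood `X(f, 1/2)` of `x` lies in `A`.
-/

namespace BoundedContinuousFunction

variable {α : Type*} [TopologicalSpace α]

lemma cfc_apply_of_continuous {φ : ℂ → ℂ} (hφ : Continuous φ) (g : α →ᵇ ℂ) (y : α) :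
    cfc φ g y = φ (g y) := by
  have : IsStarNormal g := ⟨mul_comm _ _⟩
  let ev : (α →ᵇ ℂ) →⋆ₐ[ℂ] ℂ :=
    (ContinuousMap.evalStarAlgHom ℂ ℂ y).comp (toContinuousMapStarₐ ℂ)
  change ev (cfc φ g) = _
  rw [ev.map_cfc φ g hφ.continuousOn (evalCLM ℂ y).continuous]
  exact cfc_algebraMap (A := ℂ) (g y) φ

lemma exists_mem_eq_zero_eq_one_of_norm {F : StarSubalgebra ℂ (α →ᵇ ℂ)}
    (hF : IsClosed (F : Set (α →ᵇ ℂ))) {g : α →ᵇ ℂ} (hg : g ∈ F) {a b : ℝ} (hab : a < b) :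
    ∃ f ∈ F, (∀ y, ‖g y‖ ≤ a → f y = 0) ∧ (∀ y, b ≤ ‖g y‖ → f y = 1) := by
  set φ : ℂ → ℂ := fun z => ((min 1 (max 0 ((‖z‖ - a) / (b - a))) : ℝ) : ℂ)
  have hφ : Continuous φ := by fun_prop
  refine ⟨cfc φ g, cfc_mem (hs := hF) φ hg, fun y hy => ?_, fun y hy => ?_⟩
  all_goals rw [cfc_apply_of_continuous hφ]; simp only [φ]
  · have : (‖g y‖ - a) / (b - a) ≤ 0 :=
      div_nonpos_of_nonpos_of_nonneg (by linarith) (by linarith)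
    simp [max_eq_left this]
  · have : 1 ≤ (‖g y‖ - a) / (b - a) := (one_le_div (by linarith)).2 (by linarith)
    simp [max_eq_right (zero_le_one.trans this), min_eq_left this]

lemma norm_star_mul_self_add_apply (f g : α →ᵇ ℂ) (y : α) :
    ‖(star f * f + star g * g) y‖ = ‖f y‖ ^ 2 + ‖g y‖ ^ 2 := by
  simp only [add_apply, mul_apply, star_apply, Complex.star_def, Complex.conj_mul']
  norm_cast
  exact abs_of_nonneg (by positivity)

end BoundedContinuousFunction

open Filter Topology
open scoped BoundedContinuousFunction

variable {α : Type*} [TopologicalSpace α]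

lemma isSetFilter_of_neBot {β : Type*} {l : Filter β} [l.NeBot] :
    IsSetFilter {A : Set β | A ∈ l} :=
  ⟨⟨univ, univ_mem⟩, fun _ hA _ hB => inter_mem hA hB, fun _ hA _ hAB => mem_of_superset hA hAB,
    empty_notMem l⟩

lemma mem_XSet_of_eq_zero {f : α →ᵇ ℂ} {x : α} (hfx : f x = 0) {r : ℝ} (hr : 0 ≤ r) :
    x ∈ XSet f r := by
  simpa [XSet, hfx] using hr

lemma XSet_star_mul_self_add_subset (f g : α →ᵇ ℂ) {r s : ℝ} (hr : 0 ≤ r) (hs : 0 ≤ s) :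
    XSet (star f * f + star g * g) (min r s ^ 2) ⊆ XSet f r ∩ XSet g s := by
  intro y hy
  have hy' : ‖f y‖ ^ 2 + ‖g y‖ ^ 2 ≤ min r s ^ 2 := by
    rw [← BoundedContinuousFunction.norm_star_mul_self_add_apply]; exact hy
  have := min_le_left r s
  have := min_le_right r s
  have := le_min hr hs
  constructor
  · show ‖f y‖ ≤ r
    nlinarith [norm_nonneg (f y), norm_nonneg (g y)]
  · show ‖g y‖ ≤ s
    nlinarith [norm_nonneg (f y), norm_nonneg (g y)]

section tauF

variable (F : StarSubalgebra ℂ (α →ᵇ ℂ))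

lemma nhds_tauF (x : α) : @nhds α (tauF F) x = ⨅ f ∈ F, comap f (𝓝 (f x)) := by
  unfold tauF
  simp only [nhds_iInf, nhds_induced, SetLike.mem_coe]

lemma tendsto_nhds_tauF {f : α →ᵇ ℂ} (hf : f ∈ F) (x : α) :
    Tendsto f (@nhds α (tauF F) x) (𝓝 (f x)) := by
  rw [nhds_tauF, tendsto_iff_comap]
  exact iInf₂_le f hf

lemma XSet_mem_nhds_tauF {f : α →ᵇ ℂ} (hf : f ∈ F) {x : α} (hfx : f x = 0) {r : ℝ}
    (hr : 0 < r) : XSet f r ∈ @nhds α (tauF F) x := by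
  have hball : Metric.closedBall 0 r ∈ 𝓝 (f x) := hfx ▸ Metric.closedBall_mem_nhds _ hr
  simpa [XSet, preimage, dist_zero_right] using tendsto_nhds_tauF F hf x hball

lemma isBasis_XSet (x : α) :
    IsBasis (fun p : (α →ᵇ ℂ) × ℝ => p.1 ∈ F ∧ p.1 x = 0 ∧ 0 < p.2)
      fun p => XSet p.1 p.2 where
  nonempty := ⟨(0, 1), zero_mem F, rfl, one_pos⟩
  inter := by
    rintro ⟨f, r⟩ ⟨g, s⟩ ⟨hf, hfx, hr⟩ ⟨hg, hgx, hs⟩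
    refine ⟨(star f * f + star g * g, min r s ^ 2), ⟨?_, ?_, by positivity⟩,
      XSet_star_mul_self_add_subset f g hr.le hs.le⟩
    · exact add_mem (mul_mem (star_mem hf) hf) (mul_mem (star_mem hg) hg)
    · simp [hfx, hgx]

lemma hasBasis_nhds_tauF (x : α) :
    (@nhds α (tauF F) x).HasBasis (fun p : (α →ᵇ ℂ) × ℝ => p.1 ∈ F ∧ p.1 x = 0 ∧ 0 < p.2)
      fun p => XSet p.1 p.2 := by
  have hB := (isBasis_XSet F x).hasBasis
  suffices @nhds α (tauF F) x = (isBasis_XSet F x).filter from this ▸ hB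
  refine le_antisymm (hB.ge_iff.2 fun p ⟨hp, hpx, hr⟩ => XSet_mem_nhds_tauF F hp hpx hr) ?_
  rw [nhds_tauF]
  refine le_iInf₂ fun f hf => tendsto_iff_comap.1 ?_
  rw [hB.tendsto_iff Metric.nhds_basis_closedBall]
  intro ε hε
  refine ⟨(f - algebraMap ℂ _ (f x), ε), ⟨sub_mem hf (F.algebraMap_mem _), by simp, hε⟩,
    fun y hy => ?_⟩
  simpa [XSet, dist_eq_norm] using hy

/-- The family `𝒜ₓ`. -/
def XSetBase (x : α) : Set (Set α) :=
  {S | ∃ f ∈ F, f x = 0 ∧ ∃ r : ℝ, 0 < r ∧ S = XSet f r}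

lemma isFilterBase_XSetBase (x : α) : IsFilterBase (XSetBase F x) := by
  refine ⟨⟨_, 0, zero_mem F, rfl, 1, one_pos, rfl⟩, ?_, ?_⟩
  · rintro ⟨f, -, hfx, r, hr, hempty⟩
    exact (hempty ▸ mem_XSet_of_eq_zero hfx hr.le : x ∈ (∅ : Set α))
  · rintro _ ⟨f, hf, hfx, r, hr, rfl⟩ _ ⟨g, hg, hgx, s, hs, rfl⟩
    obtain ⟨⟨h, t⟩, ⟨hh, hhx, ht⟩, hsub⟩ :=
      (isBasis_XSet F x).inter (i := (f, r)) (j := (g, s)) ⟨hf, hfx, hr⟩ ⟨hg, hgx, hs⟩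
    exact ⟨_, ⟨h, hh, hhx, t, ht, rfl⟩, hsub⟩

lemma genFilter_XSetBase (x : α) :
    genFilter (XSetBase F x) = {A : Set α | A ∈ @nhds α (tauF F) x} := by
  ext A
  simp only [genFilter, XSetBase, (hasBasis_nhds_tauF F x).mem_iff, Prod.exists]
  constructor
  · rintro ⟨_, ⟨f, hf, hfx, r, hr, rfl⟩, hA⟩
    exact ⟨f, r, ⟨hf, hfx, hr⟩, hA⟩
  · rintro ⟨f, r, ⟨hf, hfx, hr⟩, hA⟩
    exact ⟨_, ⟨f, hf, hfx, r, hr, rfl⟩, hA⟩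

lemma fFilter_nhds_tauF (hF : IsClosed (F : Set (α →ᵇ ℂ))) (x : α) :
    FFilter F {A : Set α | A ∈ @nhds α (tauF F) x} := by
  have hB := hasBasis_nhds_tauF F x
  refine ⟨@isSetFilter_of_neBot _ _ (@nhds_neBot _ (tauF F) x), ⟨univ, univ_mem⟩,
    fun A hA => ⟨x, @mem_of_mem_nhds _ (tauF F) _ _ hA⟩, fun A hA _ => ?_⟩
  obtain ⟨⟨g, r⟩, ⟨hg, hgx, hr⟩, hgA⟩ := hB.mem_iff.1 hA
  obtain ⟨f, hf, hf0, hf1⟩ :=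
    BoundedContinuousFunction.exists_mem_eq_zero_eq_one_of_norm hF hg (half_lt_self hr)
  refine ⟨XSet g (r / 2), XSet_mem_nhds_tauF F hg hgx (half_pos hr), f, hf, hf0, fun y hy => ?_⟩
  exact hf1 y (not_le.1 fun h => hy (hgA h)).le

lemma eq_nhds_tauF_of_fFilter_of_nhds_subset (x : α) {ψ : Set (Set α)} (hψ : FFilter F ψ)
    (hnhds : {A : Set α | A ∈ @nhds α (tauF F) x} ⊆ ψ) :
    ψ = {A : Set α | A ∈ @nhds α (tauF F) x} := by
  obtain ⟨⟨-, hinter, hsuper, hempty⟩, -, -, hsep⟩ := hψ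
  refine Subset.antisymm (fun A hA => ?_) hnhds
  by_cases hAuniv : A = univ
  · exact hAuniv ▸ @univ_mem _ (@nhds α (tauF F) x)
  obtain ⟨B, hB, f, hf, hfB, hfA⟩ := hsep A hA hAuniv
  have hfx : f x = 0 := by
    by_contra hfx
    have hU : f ⁻¹' {0}ᶜ ∈ ψ :=
      hnhds (tendsto_nhds_tauF F hf x (isOpen_compl_singleton.mem_nhds hfx))
    exact hempty (hsuper _ (hinter B hB _ hU) ∅ fun y ⟨hyB, hyU⟩ => hyU (hfB y hyB))
  refine mem_of_superset (XSet_mem_nhds_tauF F hf hfx one_half_pos) fun y hy => ?_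
  by_contra hyA
  have : ‖f y‖ ≤ 1 / 2 := hy
  rw [hfA y hyA, norm_one] at this
  norm_num at this

lemma fUltrafilter_nhds_tauF (hF : IsClosed (F : Set (α →ᵇ ℂ))) (x : α) :
    FUltrafilter F {A : Set α | A ∈ @nhds α (tauF F) x} :=
  ⟨fFilter_nhds_tauF F hF x, fun _ hψ => eq_nhds_tauF_of_fFilter_of_nhds_subset F x hψ⟩

end tauF

theorem stmt6 (F : StarSubalgebra ℂ (BoundedContinuousFunction X ℂ)) (hF : IsClosed (F : Set (BoundedContinuousFunction X ℂ))) (x : X) :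
    IsFilterBase {S | ∃ f ∈ F, f x = 0 ∧ ∃ r : ℝ, 0 < r ∧ S = XSet f r} ∧
    genFilter {S | ∃ f ∈ F, f x = 0 ∧ ∃ r : ℝ, 0 < r ∧ S = XSet f r} =
      {A : Set X | A ∈ @nhds X (tauF F) x} ∧
    FUltrafilter F {A : Set X | A ∈ @nhds X (tauF F) x} :=
  ⟨isFilterBase_XSetBase F x, genFilter_XSetBase F x, fUltrafilter_nhds_tauF F hF x⟩
end
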